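/- arXiv:1309.7935 — 3 statements merged into one kernel-verified Lean document; each statement's English description precedes it below -/
import Mathlib

section
/- Let a group of d users each pick each of n files independently with probability p = 1−q. Fix a partition of the d users into two groups of size d/2 each. Then the probability that one group's file union is contained in the other's is at most 2(1 + q^d − q^{d/2})^n. -/
/-!
The files are independent, so the probability that every file picked by `M1` is also picked
by `M2` is the `n`-th power of the single-file probability. For one file this event is the
disjoint union of "some member of `M2` picks it" (probability `1 - q^(d/2)`) and "nobody picks
it" (probability `q^d`). The theorem follows by the union bound over the two inclusions.
-/

open MeasureTheory Finset
open scoped ENNReal NNReal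

namespace MeasureTheory.Measure

section Transpose

variable {ι κ α : Type*} [Fintype ι] [Fintype κ] [MeasurableSpace α]
  (μ : Measure α) [IsProbabilityMeasure μ]

theorem measurePreserving_transpose :
    MeasurePreserving (fun (ω : ι × κ → α) j i => ω (i, j))
      (Measure.pi fun _ : ι × κ => μ) (Measure.pi fun _ : κ => Measure.pi fun _ : ι => μ) := by
  have hswap := measurePreserving_piCongrLeft (fun _ : κ × ι => μ) (Equiv.prodComm ι κ)
  have hcurry : MeasurePreserving (MeasurableEquiv.curry κ ι α)
      (Measure.pi fun _ : κ × ι => μ) (Measure.pi fun _ : κ => Measure.pi fun _ : ι => μ) := by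
    refine ⟨by fun_prop, ?_⟩
    simpa only [Measure.infinitePi_eq_pi] using
      Measure.infinitePi_map_curry fun (_ : κ) (_ : ι) => μ
  convert hcurry.comp hswap using 1
  ext ω j i
  simp [MeasurableEquiv.piCongrLeft, Equiv.piCongrLeft, MeasurableEquiv.curry]

theorem pi_setOf_forall_column_mem {s : Set (ι → α)} (hs : MeasurableSet s) :
    Measure.pi (fun _ : ι × κ => μ) {ω | ∀ j, (fun i => ω (i, j)) ∈ s} =
      Measure.pi (fun _ : ι => μ) s ^ Fintype.card κ := by
  have hset : {ω : ι × κ → α | ∀ j, (fun i => ω (i, j)) ∈ s} =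
      (fun ω j i => ω (i, j)) ⁻¹' Set.univ.pi fun _ : κ => s := by
    ext ω; simp
  rw [hset, (measurePreserving_transpose μ).measure_preimage
    (MeasurableSet.univ_pi fun _ => hs).nullMeasurableSet, Measure.pi_pi, Finset.prod_const,
    Finset.card_univ]

end Transpose

section BoolValued

variable {ι : Type*} [Fintype ι] (μ : Measure Bool) [IsProbabilityMeasure μ]

theorem pi_setOf_forall_mem_eq_false (B : Finset ι) :
    Measure.pi (fun _ : ι => μ) {v | ∀ i ∈ B, v i = false} = μ {false} ^ #B := by
  have hset : {v : ι → Bool | ∀ i ∈ B, v i = false} = (B : Set ι).pi fun _ => {false} := by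
    ext v; simp
  rw [hset, Measure.pi_pi_finset, Finset.prod_const]

theorem pi_setOf_exists_imp_exists [DecidableEq ι] (A B : Finset ι) :
    Measure.pi (fun _ : ι => μ) {v | (∃ i ∈ A, v i = true) → ∃ i ∈ B, v i = true} =
      1 + μ {false} ^ #(A ∪ B) - μ {false} ^ #B := by
  have hset : {v : ι → Bool | (∃ i ∈ A, v i = true) → ∃ i ∈ B, v i = true} =
      {v | ∀ i ∈ B, v i = false}ᶜ ∪ {v | ∀ i ∈ A ∪ B, v i = false} := by
    ext v
    simp only [Set.mem_ofPred_eq, Set.mem_union, Set.mem_compl_iff, ← Bool.not_eq_true,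
      ← not_exists, exists_prop, Finset.mem_union, or_and_right, exists_or]
    by_cases hB : ∃ i ∈ B, v i = true <;> simp [hB]
  have hdisj : Disjoint {v : ι → Bool | ∀ i ∈ B, v i = false}ᶜ
      {v | ∀ i ∈ A ∪ B, v i = false} := by
    rw [Set.disjoint_compl_left_iff_subset]
    exact fun v hv i hi => hv i (Finset.mem_union_right A hi)
  rw [hset, measure_union hdisj .of_discrete, prob_compl_eq_one_sub .of_discrete,
    pi_setOf_forall_mem_eq_false, pi_setOf_forall_mem_eq_false,
    ENNReal.sub_add_eq_add_sub (pow_le_one₀ zero_le prob_le_one) (by finiteness)]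

end BoolValued

end MeasureTheory.Measure

set_option linter.deprecated false in
theorem PMF.toMeasure_bernoulli_false {p : ℝ≥0} (h : p ≤ 1) :
    (PMF.bernoulli p h).toMeasure {false} = 1 - p := by
  rw [PMF.toMeasure_apply_singleton _ _ (measurableSet_singleton _), PMF.bernoulli_apply]
  simp [ENNReal.coe_sub]

/-- Random Sampling: `2*e` users each pick each of `n` files independently with
probability `p`; for a fixed partition of the users into two halves `M1`, `M2`
of size `e = d/2` each, the probability that one half's file union is contained
in the other's is at most `2*(1 + q^d - q^(d/2))^n` where `q = 1 - p`. -/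
theorem prob_splitting_violated_le (n e : ℕ) (p : ℝ≥0∞) (hp : p ≤ 1)
    (M1 M2 : Finset (Fin (2 * e)))
    (hcover : M1 ∪ M2 = Finset.univ) (hM1 : M1.card = e) (hM2 : M2.card = e) :
    (Measure.pi fun _ : Fin (2 * e) × Fin n => (PMF.bernoulli p.toNNReal (by simpa using ENNReal.toNNReal_mono ENNReal.one_ne_top hp)).toMeasure)
      {ω | (∀ j : Fin n, (∃ i ∈ M1, ω (i, j) = true) → ∃ i ∈ M2, ω (i, j) = true) ∨
           (∀ j : Fin n, (∃ i ∈ M2, ω (i, j) = true) → ∃ i ∈ M1, ω (i, j) = true)} ≤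
      2 * (1 + (1 - p) ^ (2 * e) - (1 - p) ^ e) ^ n := by
  set μ : Measure Bool :=
    (PMF.bernoulli p.toNNReal (by simpa using ENNReal.toNNReal_mono ENNReal.one_ne_top hp)).toMeasure
  have hμ : μ {false} = 1 - p :=
    (PMF.toMeasure_bernoulli_false _).trans <| by
      rw [ENNReal.coe_toNNReal (ne_top_of_le_ne_top ENNReal.one_ne_top hp)]
  have hcontained (A B : Finset (Fin (2 * e))) (hAB : A ∪ B = univ) (hB : #B = e) :
      Measure.pi (fun _ : Fin (2 * e) × Fin n => μ)
        {ω | ∀ j, (∃ i ∈ A, ω (i, j) = true) → ∃ i ∈ B, ω (i, j) = true} =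
        (1 + (1 - p) ^ (2 * e) - (1 - p) ^ e) ^ n := by
    refine (Measure.pi_setOf_forall_column_mem μ
      (s := {v | (∃ i ∈ A, v i = true) → ∃ i ∈ B, v i = true}) .of_discrete).trans ?_
    rw [Measure.pi_setOf_exists_imp_exists, hAB, card_univ, Fintype.card_fin, Fintype.card_fin, hB, hμ]
  rw [Set.ofPred_or]
  refine (measure_union_le _ _).trans_eq ?_
  rw [hcontained M1 M2 hcover hM2, hcontained M2 M1 (union_comm M2 M1 ▸ hcover) hM1, ← two_mul]
end

section
/- For m = 2^k users with file sets, if at every node of a complete binary tree of recursive bisections the two halves' file unions are mutually non-contained (the splitting condition holds), then there is a sequence of pairwise exchanges under the give-and-take rule after which every user possesses the union F of all users' files. -/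
/-!
Process the bisection tree bottom-up. Once the rounds for depths `k - 1, …, j` are done, every
user holds the union of the initial files of its depth-`j` group, the users sharing its first `j`
bits. The round for depth `j` pairs each user whose bit `j` is `false` with the user differing
from it exactly in bit `j`. These pairs are disjoint, so the exchanges of a round do not interfere,
and the two partners hold the file unions of the two halves of a depth-`j` node, which the
splitting condition makes mutually non-contained.
-/

open Classical

/-- Result of an exchange: both participants end up with the union of
their current file sets (all other users are unchanged). -/
noncomputable def applyExchange {α β : Type*} [DecidableEq α] [DecidableEq β]
    (C : α → Finset β) (pr : α × α) : α → Finset β :=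
  fun u => if u = pr.1 ∨ u = pr.2 then C pr.1 ∪ C pr.2 else C u

/-- A schedule of exchanges is valid if each exchange, performed in order,
satisfies the give-and-take (GT) criterion at the time it is performed. -/
inductive ValidSchedule {α β : Type*} [DecidableEq α] [DecidableEq β] :
    (α → Finset β) → List (α × α) → Prop
  | nil (C : α → Finset β) : ValidSchedule C []
  | cons (C : α → Finset β) (i j : α) (l : List (α × α))
      (hij : ¬ C i ⊆ C j) (hji : ¬ C j ⊆ C i)
      (htail : ValidSchedule (applyExchange C (i, j)) l) :
      ValidSchedule C ((i, j) :: l)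

section Exchange

variable {α β : Type*} [DecidableEq α] [DecidableEq β]

def Reaches (D E : α → Finset β) : Prop :=
  ∃ l : List (α × α), ValidSchedule D l ∧ l.foldl applyExchange D = E

theorem ValidSchedule.append {D : α → Finset β} {l₁ l₂ : List (α × α)}
    (h₁ : ValidSchedule D l₁) (h₂ : ValidSchedule (l₁.foldl applyExchange D) l₂) :
    ValidSchedule D (l₁ ++ l₂) := by
  induction h₁ with
  | nil => exact h₂
  | cons D i j l hij hji _ ih => exact .cons D i j _ hij hji (ih h₂)

namespace Reaches

theorem refl (D : α → Finset β) : Reaches D D := ⟨[], .nil D, rfl⟩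

theorem trans {D E F : α → Finset β} (hDE : Reaches D E) (hEF : Reaches E F) :
    Reaches D F := by
  obtain ⟨l₁, hv₁, rfl⟩ := hDE
  obtain ⟨l₂, hv₂, rfl⟩ := hEF
  exact ⟨l₁ ++ l₂, hv₁.append hv₂, List.foldl_append⟩

theorem single {D : α → Finset β} {i j : α} (hij : ¬ D i ⊆ D j) (hji : ¬ D j ⊆ D i) :
    Reaches D (applyExchange D (i, j)) :=
  ⟨[(i, j)], .cons D i j [] hij hji (.nil _), rfl⟩

end Reaches

theorem reaches_pairUnion_of_disjoint (D : α → Finset β) {τ : α → α}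
    (hτ : Function.Involutive τ) (s : Finset α) (hdisj : ∀ u ∈ s, τ u ∉ s)
    (hgt : ∀ u ∈ s, ¬ D u ⊆ D (τ u) ∧ ¬ D (τ u) ⊆ D u) :
    Reaches D fun u => if u ∈ s ∨ τ u ∈ s then D u ∪ D (τ u) else D u := by
  induction s using Finset.induction_on with
  | empty => simpa using Reaches.refl D
  | insert a s ha ih =>
    have hτas : τ a ∉ s := fun h =>
      hdisj a (Finset.mem_insert_self a s) (Finset.mem_insert_of_mem h)
    have hdisj' : ∀ u ∈ s, τ u ∉ s := fun u hu =>
      fun h => hdisj u (Finset.mem_insert_of_mem hu) (Finset.mem_insert_of_mem h)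
    refine (ih hdisj' fun u hu => hgt u (Finset.mem_insert_of_mem hu)).trans ?_
    set E : α → Finset β := fun u => if u ∈ s ∨ τ u ∈ s then D u ∪ D (τ u) else D u with hE
    have hEa : E a = D a := by simp [hE, ha, hτas]
    have hEτa : E (τ a) = D (τ a) := by simp [hE, ha, hτas, hτ a]
    have hgta := hgt a (Finset.mem_insert_self a s)
    rw [← hEa, ← hEτa] at hgta
    convert Reaches.single hgta.1 hgta.2 using 1
    funext u
    rw [applyExchange, hEa, hEτa]
    obtain rfl | rfl | ⟨hua, huτa⟩ : u = a ∨ u = τ a ∨ u ≠ a ∧ u ≠ τ a := by tauto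
    · simp
    · simp [hτ a, Finset.union_comm]
    · have hτua : τ u ≠ a := fun h => huτa (h ▸ (hτ u).symm)
      simp [hua, huτa, hτua, hE]

theorem reaches_pairUnion (D : α → Finset β) {τ : α → α} (hτ : Function.Involutive τ)
    (s : Finset α) (hs : ∀ u, u ∈ s ↔ τ u ∉ s)
    (hgt : ∀ u ∈ s, ¬ D u ⊆ D (τ u) ∧ ¬ D (τ u) ⊆ D u) :
    Reaches D fun u => D u ∪ D (τ u) := by
  convert reaches_pairUnion_of_disjoint D hτ s (fun u => (hs u).1) hgt using 2 with u
  rw [if_pos (or_iff_not_imp_left.mpr fun hu => not_not.mp ((hs u).not.mp hu))]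

end Exchange

section Cube

variable {α β : Type*} {k : ℕ} (σ : α ≃ (Fin k → Bool))

def flipBit (j : Fin k) (u : α) : α :=
  σ.symm (Function.update (σ u) j (!σ u j))

@[simp]
theorem apply_flipBit (j : Fin k) (u : α) :
    σ (flipBit σ j u) = Function.update (σ u) j (!σ u j) := by
  simp [flipBit]

theorem flipBit_involutive (j : Fin k) : Function.Involutive (flipBit σ j) :=
  fun u => σ.injective (by simp)

theorem Fin.forall_lt_iff_forall_fin {γ : Type*} {j : ℕ} (hj : j ≤ k) (x y : Fin k → γ) :
    (∀ i : Fin k, (i : ℕ) < j → x i = y i) ↔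
      ∀ i : Fin j, x ⟨i, i.isLt.trans_le hj⟩ = y ⟨i, i.isLt.trans_le hj⟩ :=
  ⟨fun h i => h _ i.isLt, fun h i hi => h ⟨i, hi⟩⟩

theorem Fin.forall_lt_succ_iff {γ : Type*} {j : ℕ} (hj : j < k) (x y : Fin k → γ) :
    (∀ i : Fin k, (i : ℕ) < j + 1 → x i = y i) ↔
      (∀ i : Fin j, x ⟨i, i.isLt.trans hj⟩ = y ⟨i, i.isLt.trans hj⟩) ∧ x ⟨j, hj⟩ = y ⟨j, hj⟩ := by
  constructor
  · intro h
    exact ⟨fun i => h _ (Nat.lt_succ_of_lt i.isLt), h _ (Nat.lt_succ_self j)⟩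
  · rintro ⟨h, hjj⟩ i hi
    obtain hi | rfl := Nat.lt_succ_iff_lt_or_eq.mp hi
    · exact h ⟨i, hi⟩
    · exact hjj

variable [Fintype α] [DecidableEq β] (C : α → Finset β)

def prefixUnion (j : ℕ) (u : α) : Finset β :=
  (Finset.univ.filter fun a => ∀ i : Fin k, (i : ℕ) < j → σ a i = σ u i).biUnion C

theorem prefixUnion_zero : prefixUnion σ C 0 = fun _ => Finset.univ.biUnion C := by
  funext u
  simp [prefixUnion]

theorem prefixUnion_self : prefixUnion σ C k = C := by
  funext u
  have : (Finset.univ.filter fun a => ∀ i : Fin k, (i : ℕ) < k → σ a i = σ u i) = {u} := by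
    ext a
    simp [← funext_iff, σ.injective.eq_iff]
  rw [prefixUnion, this, Finset.singleton_biUnion]

theorem prefixUnion_succ {j : ℕ} (hj : j < k) (u : α) :
    prefixUnion σ C (j + 1) u = (Finset.univ.filter fun a =>
      (∀ i : Fin j, σ a ⟨i, i.isLt.trans hj⟩ = σ u ⟨i, i.isLt.trans hj⟩) ∧
        σ a ⟨j, hj⟩ = σ u ⟨j, hj⟩).biUnion C := by
  simp only [prefixUnion, Fin.forall_lt_succ_iff hj]

theorem prefixUnion_succ_flipBit {j : ℕ} (hj : j < k) (u : α) :
    prefixUnion σ C (j + 1) (flipBit σ ⟨j, hj⟩ u) = (Finset.univ.filter fun a =>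
      (∀ i : Fin j, σ a ⟨i, i.isLt.trans hj⟩ = σ u ⟨i, i.isLt.trans hj⟩) ∧
        σ a ⟨j, hj⟩ = !σ u ⟨j, hj⟩).biUnion C := by
  rw [prefixUnion_succ σ C hj]
  have hne (i : Fin j) : (⟨i, i.isLt.trans hj⟩ : Fin k) ≠ ⟨j, hj⟩ := by
    simp [Fin.ext_iff, i.isLt.ne]
  simp [Function.update_of_ne (hne _)]

theorem prefixUnion_succ_union_flipBit {j : ℕ} (hj : j < k) (u : α) :
    prefixUnion σ C (j + 1) u ∪ prefixUnion σ C (j + 1) (flipBit σ ⟨j, hj⟩ u) =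
      prefixUnion σ C j u := by
  rw [prefixUnion_succ σ C hj, prefixUnion_succ_flipBit σ C hj, ← Finset.union_biUnion,
    ← Finset.filter_or, prefixUnion]
  congr 1
  refine Finset.filter_congr fun a _ => ?_
  rw [Fin.forall_lt_iff_forall_fin hj.le]
  cases σ a ⟨j, hj⟩ <;> cases σ u ⟨j, hj⟩ <;> simp

variable [DecidableEq α]

theorem reaches_prefixUnion_succ {j : ℕ} (hj : j < k)
    (hsplit : ∀ u, σ u ⟨j, hj⟩ = false →
      ¬ prefixUnion σ C (j + 1) u ⊆ prefixUnion σ C (j + 1) (flipBit σ ⟨j, hj⟩ u) ∧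
      ¬ prefixUnion σ C (j + 1) (flipBit σ ⟨j, hj⟩ u) ⊆ prefixUnion σ C (j + 1) u) :
    Reaches (prefixUnion σ C (j + 1)) (prefixUnion σ C j) := by
  have hs (u : α) : u ∈ Finset.univ.filter (fun a => σ a ⟨j, hj⟩ = false) ↔
      flipBit σ ⟨j, hj⟩ u ∉ Finset.univ.filter (fun a => σ a ⟨j, hj⟩ = false) := by
    simp
  convert reaches_pairUnion _ (flipBit_involutive σ ⟨j, hj⟩) _ hs
    (fun u hu => hsplit u (Finset.mem_filter.mp hu).2) using 1
  exact funext fun u => (prefixUnion_succ_union_flipBit σ C hj u).symm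

theorem reaches_univ_biUnion
    (hsplit : ∀ (j : ℕ) (hj : j < k) (u : α), σ u ⟨j, hj⟩ = false →
      ¬ prefixUnion σ C (j + 1) u ⊆ prefixUnion σ C (j + 1) (flipBit σ ⟨j, hj⟩ u) ∧
      ¬ prefixUnion σ C (j + 1) (flipBit σ ⟨j, hj⟩ u) ⊆ prefixUnion σ C (j + 1) u) :
    Reaches C fun _ => Finset.univ.biUnion C := by
  have key : ∀ j ≤ k, Reaches (prefixUnion σ C j) (prefixUnion σ C 0) := by
    intro j
    induction j with
    | zero => exact fun _ => Reaches.refl _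
    | succ j ih =>
      intro hj
      exact (reaches_prefixUnion_succ σ C hj (hsplit j hj)).trans (ih (Nat.le_of_succ_le hj))
  simpa only [prefixUnion_self, prefixUnion_zero] using key k le_rfl

end Cube

/-- TreeSplit: for `m = 2^k` users (identified with `Fin k → Bool` via `σ`),
if every node of the complete binary tree of recursive bisections satisfies the
splitting condition (the file unions of the two halves are mutually
non-contained), then there is a valid schedule of give-and-take exchanges after
which every user possesses the union of all users' files. -/
theorem treeSplit_schedule_exists {α β : Type*} [Fintype α] [DecidableEq α]
    [DecidableEq β] (k : ℕ) (σ : α ≃ (Fin k → Bool)) (C : α → Finset β)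
    (hsplit : ∀ (j : ℕ) (hj : j < k) (v : Fin j → Bool),
      ¬ (Finset.univ.filter (fun u : α =>
            (∀ i : Fin j, σ u ⟨i, i.isLt.trans hj⟩ = v i) ∧ σ u ⟨j, hj⟩ = false)).biUnion C ⊆
          (Finset.univ.filter (fun u : α =>
            (∀ i : Fin j, σ u ⟨i, i.isLt.trans hj⟩ = v i) ∧ σ u ⟨j, hj⟩ = true)).biUnion C ∧
      ¬ (Finset.univ.filter (fun u : α =>
            (∀ i : Fin j, σ u ⟨i, i.isLt.trans hj⟩ = v i) ∧ σ u ⟨j, hj⟩ = true)).biUnion C ⊆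
          (Finset.univ.filter (fun u : α =>
            (∀ i : Fin j, σ u ⟨i, i.isLt.trans hj⟩ = v i) ∧ σ u ⟨j, hj⟩ = false)).biUnion C) :
    ∃ l : List (α × α), ValidSchedule C l ∧
      ∀ u : α, List.foldl applyExchange C l u = Finset.univ.biUnion C := by
  obtain ⟨l, hvalid, hfinal⟩ := reaches_univ_biUnion σ C fun j hj u hu => by
    rw [prefixUnion_succ σ C hj, prefixUnion_succ_flipBit σ C hj, hu]
    exact hsplit j hj _
  exact ⟨l, hvalid, fun u => by rw [hfinal]⟩
end

section
/- Under the event E_G with culprit user u_1 (the unique user in all dominant halves), every subset G' of size d/2 − 1 of the remaining d − 1 users satisfies B ⊆ F_{G'}, where B = F_G ∖ C(u_1). -/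
open Classical

/-- Under the event `E_G` (every equal bipartition of the `2e`-user group `G`
has nested file unions), with culprit user `u₁` (a member of every dominant
half), every subset `G'` of the remaining users of size `e - 1` satisfies
`B ⊆ F_{G'}` where `B = F_G \ C(u₁)`. -/
theorem culprit_complement_covered {α β : Type*} [DecidableEq α]
    (C : α → Finset β) (G : Finset α) (e : ℕ) (he : 1 ≤ e)
    (hcard : G.card = 2 * e) (u₁ : α) (hu₁ : u₁ ∈ G)
    (hE : ∀ H ⊆ G, H.card = e →
      H.biUnion C ⊆ (G \ H).biUnion C ∨ (G \ H).biUnion C ⊆ H.biUnion C)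
    (hculprit : ∀ H ⊆ G, H.card = e → H.biUnion C = G.biUnion C → u₁ ∈ H) :
    ∀ G' ⊆ G.erase u₁, G'.card = e - 1 →
      G.biUnion C \ C u₁ ⊆ G'.biUnion C := by
  intro G' hG' hG'card
  have hu₁G' : u₁ ∉ G' := fun h => (Finset.mem_erase.mp (hG' h)).1 rfl
  set H : Finset α := insert u₁ G' with hH
  have hHsub : H ⊆ G := by
    intro x hx
    rcases Finset.mem_insert.mp hx with rfl | hx
    · exact hu₁
    · exact Finset.erase_subset _ _ (hG' hx)
  have hHcard : H.card = e := by
    rw [hH, Finset.card_insert_of_notMem hu₁G', hG'card]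
    omega
  have hunion : H.biUnion C ∪ (G \ H).biUnion C = G.biUnion C := by
    ext x
    simp only [Finset.mem_union, Finset.mem_biUnion, Finset.mem_sdiff]
    constructor
    · rintro (⟨u, hu, h⟩ | ⟨u, ⟨hu, -⟩, h⟩)
      · exact ⟨u, hHsub hu, h⟩
      · exact ⟨u, hu, h⟩
    · rintro ⟨u, hu, h⟩
      by_cases huH : u ∈ H
      · exact Or.inl ⟨u, huH, h⟩
      · exact Or.inr ⟨u, ⟨hu, huH⟩, h⟩
  rcases hE H hHsub hHcard with h | h
  · exfalso
    have hGH : (G \ H).biUnion C = G.biUnion C := by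
      apply le_antisymm
      · exact Finset.biUnion_subset_biUnion_of_subset_left C (Finset.sdiff_subset)
      · rw [← hunion]; exact Finset.union_subset h le_rfl
    have hcompl : (G \ H).card = e := by
      rw [Finset.card_sdiff_of_subset hHsub, hcard, hHcard]; omega
    have := hculprit (G \ H) (Finset.sdiff_subset) hcompl hGH
    exact (Finset.mem_sdiff.mp this).2 (Finset.mem_insert_self _ _)
  · have hHG : H.biUnion C = G.biUnion C := by
      apply le_antisymm
      · exact Finset.biUnion_subset_biUnion_of_subset_left C hHsub
      · rw [← hunion]; exact Finset.union_subset le_rfl h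
    intro x hx
    rcases Finset.mem_sdiff.mp hx with ⟨hxG, hxC⟩
    have : x ∈ H.biUnion C := hHG ▸ hxG
    rcases Finset.mem_biUnion.mp this with ⟨u, hu, hxu⟩
    rcases Finset.mem_insert.mp hu with rfl | hu
    · exact absurd hxu hxC
    · exact Finset.mem_biUnion.mpr ⟨u, hu, hxu⟩
end
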